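/- arXiv:2307.14007 — 6 statements merged into one kernel-verified Lean document; each statement's English description precedes it below -/
import Mathlib

section
/- For every triple (α, β, γ) of real numbers with α + β + γ = π, and every natural number n, the n-th iterate of T satisfies Tⁿ(α, β, γ) = (π/3, π/3, π/3) + (-1/2)ⁿ · ((α, β, γ) - (π/3, π/3, π/3)), where the scaling acts componentwise. -/
open Real

/-- The angle-bisector-perpendicular triangle transformation on angle triples. -/
noncomputable def T (p : ℝ × ℝ × ℝ) : ℝ × ℝ × ℝ :=
  ((p.2.1 + p.2.2) / 2, (p.1 + p.2.2) / 2, (p.1 + p.2.1) / 2)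

theorem iterate_T_formula (α β γ : ℝ) (hsum : α + β + γ = π) (n : ℕ) :
    T^[n] (α, β, γ) =
      (π / 3 + (-1 / 2 : ℝ) ^ n * (α - π / 3),
       π / 3 + (-1 / 2 : ℝ) ^ n * (β - π / 3),
       π / 3 + (-1 / 2 : ℝ) ^ n * (γ - π / 3)) := by
  have hγ : γ = π - α - β := by linarith
  subst hγ
  induction n with
  | zero => simp
  | succ n ih =>
    rw [Function.iterate_succ_apply', ih]
    simp only [T, Prod.mk.injEq, pow_succ]
    refine ⟨by ring, by ring, by ring⟩
end

section
/- Let (α₀, β₀, γ₀) ∈ (0,π)³ with α₀ + β₀ + γ₀ = π and α₀ ≥ β₀ ≥ γ₀, and for each n let (αₙ, βₙ, γₙ) = Tⁿ(α₀, β₀, γ₀). Then for every k ≥ 0, the quality q₂ₖ = min{α₂ₖ, β₂ₖ, γ₂ₖ} / max{α₂ₖ, β₂ₖ, γ₂ₖ} equals (3γ₀ + (4ᵏ - 1)π) / (3α₀ + (4ᵏ - 1)π). -/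
open Real

lemma T_iterate_two_mul (a b c : ℝ) (k : ℕ) :
    T^[2 * k] (a, b, c) =
      ((a + (4 ^ k - 1) * (a + b + c) / 3) / 4 ^ k,
       (b + (4 ^ k - 1) * (a + b + c) / 3) / 4 ^ k,
       (c + (4 ^ k - 1) * (a + b + c) / 3) / 4 ^ k) := by
  induction k with
  | zero => simp
  | succ n ih =>
    have h : 2 * (n + 1) = 2 + 2 * n := by ring
    rw [h, Function.iterate_add_apply, ih]
    show T (T _) = _
    simp only [T]
    have h4 : (4 : ℝ) ^ n ≠ 0 := by positivity
    refine Prod.ext ?_ (Prod.ext ?_ ?_) <;> · simp only []; field_simp; ring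

theorem quality_even_formula (α₀ β₀ γ₀ : ℝ)
    (hα : α₀ ∈ Set.Ioo 0 π) (hβ : β₀ ∈ Set.Ioo 0 π) (hγ : γ₀ ∈ Set.Ioo 0 π)
    (hsum : α₀ + β₀ + γ₀ = π) (hab : α₀ ≥ β₀) (hbc : β₀ ≥ γ₀) (k : ℕ) :
    (fun p : ℝ × ℝ × ℝ => min (min p.1 p.2.1) p.2.2 / max (max p.1 p.2.1) p.2.2)
        (T^[2 * k] (α₀, β₀, γ₀)) =
      (3 * γ₀ + (4 ^ k - 1) * π) / (3 * α₀ + (4 ^ k - 1) * π) := by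
  rw [T_iterate_two_mul, hsum]
  simp only []
  have h4 : (0:ℝ) < 4 ^ k := by positivity
  have h41 : (1:ℝ) ≤ 4 ^ k := one_le_pow₀ (by norm_num)
  have hpi := pi_pos
  have hba : (β₀ + (4 ^ k - 1) * π / 3) / 4 ^ k ≤ (α₀ + (4 ^ k - 1) * π / 3) / 4 ^ k := by
    gcongr <;> linarith
  have hcb : (γ₀ + (4 ^ k - 1) * π / 3) / 4 ^ k ≤ (β₀ + (4 ^ k - 1) * π / 3) / 4 ^ k := by
    gcongr <;> linarith
  rw [min_eq_right hba, min_eq_right hcb, max_eq_left hba, max_eq_left (hcb.trans hba)]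
  have hD : (0:ℝ) < 3 * α₀ + (4 ^ k - 1) * π := by
    nlinarith [mul_nonneg (sub_nonneg.2 h41) hpi.le]
  have hA : (0:ℝ) < α₀ + (4 ^ k - 1) * π / 3 := by linarith
  rw [div_eq_div_iff (div_pos hA h4).ne' hD.ne']
  field_simp
end

section
/- Let (α₀, β₀, γ₀) ∈ (0,π)³ with α₀ + β₀ + γ₀ = π and α₀ ≥ β₀ ≥ γ₀, and for each n let (αₙ, βₙ, γₙ) = Tⁿ(α₀, β₀, γ₀). Then for every k ≥ 0, the quality q₂ₖ₊₁ = min{α₂ₖ₊₁, β₂ₖ₊₁, γ₂ₖ₊₁} / max{α₂ₖ₊₁, β₂ₖ₊₁, γ₂ₖ₊₁} equals ((4ᵏ⁺¹ + 2)π - 6α₀) / ((4ᵏ⁺¹ + 2)π - 6γ₀). -/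
open Real

lemma T_iterate (a b c : ℝ) (hsum : a + b + c = π) (n : ℕ) :
    T^[n] (a, b, c) =
      (π/3 + (-1/2 : ℝ)^n * (a - π/3),
       π/3 + (-1/2 : ℝ)^n * (b - π/3),
       π/3 + (-1/2 : ℝ)^n * (c - π/3)) := by
  have hc : c = π - a - b := by linarith
  subst hc
  induction n with
  | zero => simp
  | succ n ih =>
    rw [Function.iterate_succ_apply', ih]
    simp only [T, Prod.mk.injEq]
    refine ⟨by ring, by ring, by ring⟩

theorem quality_odd_formula (α₀ β₀ γ₀ : ℝ)
    (hα : α₀ ∈ Set.Ioo 0 π) (hβ : β₀ ∈ Set.Ioo 0 π) (hγ : γ₀ ∈ Set.Ioo 0 π)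
    (hsum : α₀ + β₀ + γ₀ = π) (hab : α₀ ≥ β₀) (hbc : β₀ ≥ γ₀) (k : ℕ) :
    (fun p : ℝ × ℝ × ℝ => min (min p.1 p.2.1) p.2.2 / max (max p.1 p.2.1) p.2.2)
        (T^[2 * k + 1] (α₀, β₀, γ₀)) =
      ((4 ^ (k + 1) + 2) * π - 6 * α₀) / ((4 ^ (k + 1) + 2) * π - 6 * γ₀) := by
  rw [T_iterate α₀ β₀ γ₀ hsum]
  set t : ℝ := (2 : ℝ)^(2*k+1) with ht
  have htpos : (0:ℝ) < t := by positivity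
  have htne : t ≠ 0 := ne_of_gt htpos
  have hneg : (-1/2 : ℝ)^(2*k+1) = -(1/t) := by
    rw [show (-1/2 : ℝ) = -(1/2) by norm_num, Odd.neg_pow ⟨k, by ring⟩, div_pow, one_pow, ht]
  have h4 : (4 : ℝ)^(k+1) = 2 * t := by
    rw [ht, show (4:ℝ) = 2^2 by norm_num, ← pow_mul]
    rw [show 2*(k+1) = (2*k+1)+1 by ring, pow_succ]
    ring
  have hpi : 0 < π := Real.pi_pos
  have hγle : γ₀ ≤ π/3 := by linarith
  have e : ∀ x : ℝ, π/3 + (-1/2 : ℝ)^(2*k+1) * (x - π/3) = π/3 - (x - π/3)/t := by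
    intro x; rw [hneg]; ring
  simp only [e]
  have hmono : ∀ x y : ℝ, x ≤ y → π/3 - (y - π/3)/t ≤ π/3 - (x - π/3)/t := by
    intro x y hxy
    have h := mul_le_mul_of_nonneg_right (sub_le_sub_right hxy (π/3))
      (inv_nonneg.mpr htpos.le)
    simp only [div_eq_mul_inv]
    linarith
  have h1 : π/3 - (α₀ - π/3)/t ≤ π/3 - (β₀ - π/3)/t := hmono _ _ hab
  have h2 : π/3 - (β₀ - π/3)/t ≤ π/3 - (γ₀ - π/3)/t := hmono _ _ hbc
  have hmin : min (min (π/3 - (α₀ - π/3)/t) (π/3 - (β₀ - π/3)/t)) (π/3 - (γ₀ - π/3)/t)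
      = π/3 - (α₀ - π/3)/t := by
    rw [min_eq_left h1]; exact min_eq_left (h1.trans h2)
  have hmax : max (max (π/3 - (α₀ - π/3)/t) (π/3 - (β₀ - π/3)/t)) (π/3 - (γ₀ - π/3)/t)
      = π/3 - (γ₀ - π/3)/t :=
    max_eq_right (max_le (h1.trans h2) h2)
  rw [hmin, hmax]
  have ht1 : (1:ℝ) ≤ t := by
    rw [ht]
    calc (1:ℝ) = 2^0 := by norm_num
    _ ≤ 2^(2*k+1) := pow_le_pow_right₀ (by norm_num) (Nat.zero_le _)
  have hdenpos : 0 < π/3 - (γ₀ - π/3)/t := by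
    have : (γ₀ - π/3)/t ≤ 0 := div_nonpos_of_nonpos_of_nonneg (by linarith) htpos.le
    linarith
  have hden2 : ((4:ℝ)^(k+1) + 2) * π - 6 * γ₀ > 0 := by
    rw [h4]; nlinarith
  rw [div_eq_div_iff (ne_of_gt hdenpos) (ne_of_gt hden2), h4]
  field_simp
  ring
end

section
/- Let (α₀, β₀, γ₀) be a triple of real numbers with α₀ + β₀ + γ₀ = π, and denote by α₂ₙ the first component of T²ⁿ(α₀, β₀, γ₀). Then for every n ≥ 0, α₂ₙ − π/3 = (1/4ⁿ)(α₀ − π/3); in particular, if α₀ ≠ π/3, then for all n ≥ 1, |α₂ₙ − π/3| / |α₂ₙ₋₂ − π/3| = 1/4, i.e. the iterated squared transformation T² converges linearly with convergence rate 1/4. -/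
open Real

theorem linear_convergence_rate (α₀ β₀ γ₀ : ℝ) (hsum : α₀ + β₀ + γ₀ = π) :
    (∀ n : ℕ, (T^[2 * n] (α₀, β₀, γ₀)).1 - π / 3 = (1 / 4 ^ n) * (α₀ - π / 3)) ∧
    (α₀ ≠ π / 3 → ∀ n : ℕ, 1 ≤ n →
      |(T^[2 * n] (α₀, β₀, γ₀)).1 - π / 3| /
        |(T^[2 * (n - 1)] (α₀, β₀, γ₀)).1 - π / 3| = 1 / 4) := by
  have key : ∀ n : ℕ, (T^[2 * n] (α₀, β₀, γ₀)).1 - π / 3 = (1 / 4 ^ n) * (α₀ - π / 3) ∧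
      (T^[2 * n] (α₀, β₀, γ₀)).1 + (T^[2 * n] (α₀, β₀, γ₀)).2.1 +
        (T^[2 * n] (α₀, β₀, γ₀)).2.2 = π := by
    intro n
    induction n with
    | zero => simpa using hsum
    | succ n ih =>
      obtain ⟨h1, h2⟩ := ih
      have hstep : 2 * (n + 1) = 2 * n + 1 + 1 := by ring
      rw [hstep, Function.iterate_succ_apply', Function.iterate_succ_apply']
      set q := T^[2 * n] (α₀, β₀, γ₀) with hq
      simp only [T]
      refine ⟨?_, by linarith⟩
      linear_combination h1 / 4 + h2 / 4
  refine ⟨fun n => (key n).1, fun hne n hn => ?_⟩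
  rw [(key n).1, (key (n - 1)).1]
  have hne' : α₀ - π / 3 ≠ 0 := sub_ne_zero.mpr hne
  have habs : |α₀ - π / 3| ≠ 0 := abs_ne_zero.mpr hne'
  obtain ⟨m, rfl⟩ := Nat.exists_eq_add_of_le hn
  simp only [Nat.add_sub_cancel_left] at *
  have h4m : ((4:ℝ) ^ m) ≠ 0 := by positivity
  rw [abs_mul, abs_mul, abs_div, abs_div, abs_one,
    abs_of_pos (show (0:ℝ) < 4 ^ (1 + m) by positivity),
    abs_of_pos (show (0:ℝ) < 4 ^ m by positivity), pow_add, pow_one]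
  rw [mul_div_mul_right _ _ habs]
  field_simp
end

section
/- Let (α₀, β₀, γ₀) ∈ (0,π)³ with α₀ + β₀ + γ₀ = π, let (αⱼ, βⱼ, γⱼ) = Tʲ(α₀, β₀, γ₀), and set fⱼ = 1 / (sin(αⱼ/2) · sin(βⱼ/2) · sin(γⱼ/2)). Then the sequence (fⱼ) converges to 2³ = 8 as j → ∞. -/
/-!
`T` preserves the sum of a triple and multiplies each entry's deviation from the mean by `-1/2`,
so the iterates converge geometrically to the equilateral triple `(π/3, π/3, π/3)`. The scaling
factor is continuous there, with value `1 / sin (π/6) ^ 3 = 8`.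
-/

open Real Filter

open Topology

theorem T_iterate_eq (a b c m : ℝ) (hm : a + b + c = 3 * m) (j : ℕ) :
    T^[j] (a, b, c) =
      (m + (-1/2 : ℝ) ^ j * (a - m), m + (-1/2 : ℝ) ^ j * (b - m),
        m + (-1/2 : ℝ) ^ j * (c - m)) := by
  induction j with
  | zero => simp
  | succ n ih =>
    rw [Function.iterate_succ_apply', ih]
    simp only [T, Prod.mk.injEq]
    refine ⟨?_, ?_, ?_⟩ <;> linear_combination ((-1/2 : ℝ) ^ n / 2) * hm

theorem tendsto_T_iterate (a b c m : ℝ) (hm : a + b + c = 3 * m) :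
    Tendsto (fun j : ℕ => T^[j] (a, b, c)) atTop (𝓝 (m, m, m)) := by
  have hgeom : Tendsto (fun j : ℕ => (-1/2 : ℝ) ^ j) atTop (𝓝 0) :=
    tendsto_pow_atTop_nhds_zero_of_abs_lt_one (by norm_num [abs_of_neg])
  have hcoord (d : ℝ) : Tendsto (fun j : ℕ => m + (-1/2 : ℝ) ^ j * d) atTop (𝓝 m) := by
    simpa using (hgeom.mul_const d).const_add m
  simp only [T_iterate_eq a b c m hm]
  exact (hcoord _).prodMk_nhds ((hcoord _).prodMk_nhds (hcoord _))

theorem scaling_factor_tendsto_eight_general (α₀ β₀ γ₀ : ℝ)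
    (hsum : α₀ + β₀ + γ₀ = π) :
    Tendsto
      (fun j : ℕ =>
        1 / (sin ((T^[j] (α₀, β₀, γ₀)).1 / 2) *
             sin ((T^[j] (α₀, β₀, γ₀)).2.1 / 2) *
             sin ((T^[j] (α₀, β₀, γ₀)).2.2 / 2)))
      atTop (nhds 8) := by
  have hlim := tendsto_T_iterate α₀ β₀ γ₀ (π / 3) (by linarith)
  have hsin : sin (π / 3 / 2) = 1 / 2 := by rw [div_div, ← sin_pi_div_six]; ring_nf
  have hcont : ContinuousAt
      (fun p : ℝ × ℝ × ℝ => 1 / (sin (p.1 / 2) * sin (p.2.1 / 2) * sin (p.2.2 / 2)))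
      (π / 3, π / 3, π / 3) :=
    continuousAt_const.div (by fun_prop) (by simp [hsin])
  convert hcont.tendsto.comp hlim using 1
  congr 1
  norm_num [hsin]

theorem scaling_factor_tendsto_eight (α₀ β₀ γ₀ : ℝ)
    (hα : α₀ ∈ Set.Ioo 0 π) (hβ : β₀ ∈ Set.Ioo 0 π) (hγ : γ₀ ∈ Set.Ioo 0 π)
    (hsum : α₀ + β₀ + γ₀ = π) :
    Tendsto
      (fun j : ℕ =>
        1 / (sin ((T^[j] (α₀, β₀, γ₀)).1 / 2) *
             sin ((T^[j] (α₀, β₀, γ₀)).2.1 / 2) *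
             sin ((T^[j] (α₀, β₀, γ₀)).2.2 / 2)))
      atTop (nhds 8) :=
  scaling_factor_tendsto_eight_general α₀ β₀ γ₀ hsum
end

section
/- Let (α₀, β₀, γ₀) ∈ (0,π)³ with α₀ + β₀ + γ₀ = π, let (αⱼ, βⱼ, γⱼ) = Tʲ(α₀, β₀, γ₀), and set fⱼ = 1 / (sin(αⱼ/2) · sin(βⱼ/2) · sin(γⱼ/2)). Then the partial products ∏_{j=0}^{n} fⱼ tend to infinity as n → ∞; consequently the edge lengths of the iterated triangles grow without bound. -/
open Real Filter

lemma sin_half_prod_le {α β γ : ℝ} (hα : α ∈ Set.Ioo 0 π) (hβ : β ∈ Set.Ioo 0 π)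
    (hγ : γ ∈ Set.Ioo 0 π) (hsum : α + β + γ = π) :
    sin (α/2) * sin (β/2) * sin (γ/2) ≤ 1/8 := by
  have hC1 : sin (γ/2) ≤ 1 := Real.sin_le_one _
  have hC0 : 0 < sin (γ/2) := Real.sin_pos_of_pos_of_lt_pi (by linarith [hγ.1])
    (by linarith [hγ.2, Real.pi_pos])
  have hAB : α/2 + β/2 = π/2 - γ/2 := by linarith
  have h1 : sin (α/2) * sin (β/2) = (cos (α/2 - β/2) - sin (γ/2)) / 2 := by
    have : cos (α/2 + β/2) = sin (γ/2) := by rw [hAB, Real.cos_pi_div_two_sub]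
    rw [← this, Real.cos_add, Real.cos_sub]; ring
  have h2 : cos (α/2 - β/2) ≤ 1 := Real.cos_le_one _
  nlinarith [sq_nonneg (2 * sin (γ/2) - 1), hC0.le]

lemma sin_half_pos {α : ℝ} (hα : α ∈ Set.Ioo 0 π) : 0 < sin (α/2) :=
  Real.sin_pos_of_pos_of_lt_pi (by linarith [hα.1]) (by linarith [hα.2, Real.pi_pos])

def Good (p : ℝ × ℝ × ℝ) : Prop :=
  p.1 ∈ Set.Ioo 0 π ∧ p.2.1 ∈ Set.Ioo 0 π ∧ p.2.2 ∈ Set.Ioo 0 π ∧ p.1 + p.2.1 + p.2.2 = π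

lemma good_T {p : ℝ × ℝ × ℝ} (h : Good p) : Good (T p) := by
  obtain ⟨⟨h1a, h1b⟩, ⟨h2a, h2b⟩, ⟨h3a, h3b⟩, hs⟩ := h
  have hπ := Real.pi_pos
  refine ⟨⟨by simp only [T]; linarith, by simp only [T]; linarith⟩,
    ⟨by simp only [T]; linarith, by simp only [T]; linarith⟩,
    ⟨by simp only [T]; linarith, by simp only [T]; linarith⟩, by simp only [T]; linarith⟩

lemma good_iter {p : ℝ × ℝ × ℝ} (h : Good p) (j : ℕ) : Good (T^[j] p) := by
  induction j with
  | zero => simpa using h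
  | succ n ih => rw [Function.iterate_succ_apply']; exact good_T ih

theorem partial_products_tendsto_atTop (α₀ β₀ γ₀ : ℝ)
    (hα : α₀ ∈ Set.Ioo 0 π) (hβ : β₀ ∈ Set.Ioo 0 π) (hγ : γ₀ ∈ Set.Ioo 0 π)
    (hsum : α₀ + β₀ + γ₀ = π) :
    Tendsto
      (fun n : ℕ => ∏ j ∈ Finset.range (n + 1),
        1 / (sin ((T^[j] (α₀, β₀, γ₀)).1 / 2) *
             sin ((T^[j] (α₀, β₀, γ₀)).2.1 / 2) *
             sin ((T^[j] (α₀, β₀, γ₀)).2.2 / 2)))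
      atTop atTop := by
  have hgood : Good (α₀, β₀, γ₀) := ⟨hα, hβ, hγ, hsum⟩
  have hfactor : ∀ j : ℕ, (8 : ℝ) ≤
      1 / (sin ((T^[j] (α₀, β₀, γ₀)).1 / 2) *
           sin ((T^[j] (α₀, β₀, γ₀)).2.1 / 2) *
           sin ((T^[j] (α₀, β₀, γ₀)).2.2 / 2)) := by
    intro j
    obtain ⟨h1, h2, h3, hs⟩ := good_iter hgood j
    have hp : 0 < sin ((T^[j] (α₀, β₀, γ₀)).1 / 2) *
        sin ((T^[j] (α₀, β₀, γ₀)).2.1 / 2) * sin ((T^[j] (α₀, β₀, γ₀)).2.2 / 2) :=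
      mul_pos (mul_pos (sin_half_pos h1) (sin_half_pos h2)) (sin_half_pos h3)
    have hle := sin_half_prod_le h1 h2 h3 hs
    rw [le_div_iff₀ hp]
    linarith
  have hbound : ∀ n : ℕ, (8 : ℝ) ^ (n + 1) ≤
      ∏ j ∈ Finset.range (n + 1),
        1 / (sin ((T^[j] (α₀, β₀, γ₀)).1 / 2) *
             sin ((T^[j] (α₀, β₀, γ₀)).2.1 / 2) *
             sin ((T^[j] (α₀, β₀, γ₀)).2.2 / 2)) := by
    intro n
    calc (8 : ℝ) ^ (n + 1) = ∏ _j ∈ Finset.range (n + 1), (8 : ℝ) := by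
          rw [Finset.prod_const, Finset.card_range]
      _ ≤ _ := Finset.prod_le_prod (fun i _ => by norm_num) (fun i _ => hfactor i)
  refine tendsto_atTop_mono hbound ?_
  exact (tendsto_pow_atTop_atTop_of_one_lt (by norm_num : (1:ℝ) < 8)).comp
    (tendsto_add_atTop_nat 1)
end
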